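/- arXiv:2303.01326 — 4 statements merged into one kernel-verified Lean document; each statement's English description precedes it below -/
import Mathlib

section
/- Let p ≥ 1 and let Θ₀ be a symmetric positive definite p×p real matrix whose eigenvalues satisfy 1/L ≤ Λ_min(Θ₀) ≤ Λ_max(Θ₀) ≤ L for some constant L ≥ 1, and set Σ₀ = Θ₀⁻¹. Then for every symmetric p×p real matrix Δ with ‖Δ‖_F ≤ 1/(2L), the matrix Δ + Θ₀ is positive definite, the quantity f(Δ) := tr(Δ Σ₀) − [log det(Δ + Θ₀) − log det(Θ₀)] is well defined, and f(Δ) ≥ ‖Δ‖_F² / (2(L + 1/(2L))²). -/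
open Matrix
open scoped BigOperators Classical

noncomputable section

/-- Frobenius norm squared: `‖A‖_F² = Σ_{i,j} A_{ij}²`. -/
def frobSq {p : ℕ} (A : Matrix (Fin p) (Fin p) ℝ) : ℝ := ∑ i, ∑ j, (A i j) ^ 2

/-- Frobenius norm `‖A‖_F = (Σ_{i,j} A_{ij}²)^{1/2}`. -/
def frobNorm {p : ℕ} (A : Matrix (Fin p) (Fin p) ℝ) : ℝ := Real.sqrt (frobSq A)

/-- Entrywise ℓ₁ norm `‖A‖₁ = Σ_{i,j} |A_{ij}|`. -/
def l1Norm {p : ℕ} (A : Matrix (Fin p) (Fin p) ℝ) : ℝ := ∑ i, ∑ j, |A i j|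

/-- Entrywise supremum norm `‖A‖_∞ = max_{i,j} |A_{ij}|`. -/
def supNorm {p : ℕ} (A : Matrix (Fin p) (Fin p) ℝ) : ℝ := ⨆ i, ⨆ j, |A i j|

/-- ℓ₁-operator norm `|||A|||₁ = max_j Σ_i |A_{ij}|`. -/
def opNorm1 {p : ℕ} (A : Matrix (Fin p) (Fin p) ℝ) : ℝ := ⨆ j, ∑ i, |A i j|

/-- `A⁺`: the diagonal matrix with the same diagonal as `A`. -/
def diagPart {p : ℕ} (A : Matrix (Fin p) (Fin p) ℝ) : Matrix (Fin p) (Fin p) ℝ :=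
  Matrix.diagonal (fun i => A i i)

/-- `A⁻ = A − A⁺`: the off-diagonal part of `A`. -/
def offDiagPart {p : ℕ} (A : Matrix (Fin p) (Fin p) ℝ) : Matrix (Fin p) (Fin p) ℝ :=
  A - diagPart A

/-- Number of off-diagonal nonzero entries of `A`:
`s = #{(i,j) : i ≠ j, A_{ij} ≠ 0}`. -/
def sparsity {p : ℕ} (A : Matrix (Fin p) (Fin p) ℝ) : ℕ :=
  (Finset.univ.filter (fun ij : Fin p × Fin p => ij.1 ≠ ij.2 ∧ A ij.1 ij.2 ≠ 0)).card

/-- Fused graphical lasso objective for `K` groups: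
`F(Θ₁,…,Θ_K) = Σ_k [tr(Σ̂⁽ᵏ⁾Θ_k) − log det Θ_k] + λ Σ_k ‖Θ_k⁻‖₁
  + ρ Σ_{k<k'} ‖Θ_k⁻ − Θ_{k'}⁻‖₁`. -/
def objFGL {p K : ℕ} (S : Fin K → Matrix (Fin p) (Fin p) ℝ) (lam rho : ℝ)
    (Θ : Fin K → Matrix (Fin p) (Fin p) ℝ) : ℝ :=
  ∑ k, (Matrix.trace (S k * Θ k) - Real.log (Θ k).det)
    + lam * ∑ k, l1Norm (offDiagPart (Θ k))
    + rho * ∑ k, ∑ k', if k < k' then l1Norm (offDiagPart (Θ k) - offDiagPart (Θ k')) else 0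

/-!
Along the segment `Θ(t) = Θ₀ + t • Δ`, `t ∈ [0, 1]`, the Loewner bounds `(1/L) I ≤ Θ₀ ≤ L I` and
`-‖Δ‖_F I ≤ Δ ≤ ‖Δ‖_F I` keep `Θ(t)` between `(1/(2L)) I` and `M I` with `M = L + 1/(2L)`; in
particular `Θ(t)` is positive definite. The function `g(t) = t tr(Θ₀⁻¹Δ) - log det Θ(t)` has
`g'(0) = 0` and `g''(t) = tr(Θ(t)⁻¹ Δ Θ(t)⁻¹ Δ) ≥ ‖Δ‖_F² / M²`, since `Θ(t)⁻¹ ≥ M⁻¹ I`. The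
second-order Taylor bound `g(1) ≥ g(0) + ‖Δ‖_F² / (2 M²)` is the claim.
-/

open scoped MatrixOrder

namespace Matrix

variable {n : Type*} [DecidableEq n]

lemma PosDef.of_smul_one_le {A : Matrix n n ℝ} {a : ℝ} (ha : 0 < a) (hA : a • 1 ≤ A) :
    A.PosDef := by
  simpa using (PosDef.one.smul ha).add_posSemidef (sub_nonneg.mpr hA).posSemidef

variable [Fintype n]

lemma trace_mul_nonneg {A B : Matrix n n ℝ} (hA : 0 ≤ A) (hB : 0 ≤ B) : 0 ≤ trace (A * B) := by
  obtain ⟨R, rfl⟩ := CStarAlgebra.nonneg_iff_eq_star_mul_self.mp hA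
  rw [star_eq_conjTranspose, Matrix.mul_assoc, trace_mul_comm]
  exact (hB.posSemidef.mul_mul_conjTranspose_same R).trace_nonneg

lemma sq_mul_trace_mul_self_le {S Δ : Matrix n n ℝ} {c : ℝ} (hc : 0 ≤ c) (hS : c • 1 ≤ S)
    (hΔ : Δ.IsSymm) : c ^ 2 * trace (Δ * Δ) ≤ trace (S * Δ * (S * Δ)) := by
  obtain ⟨P, hP, rfl⟩ : ∃ P, 0 ≤ P ∧ S = c • 1 + P := ⟨S - c • 1, sub_nonneg.mpr hS, by abel⟩
  have hΔΔ : 0 ≤ Δ * Δ := by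
    simpa [hΔ.eq] using (posSemidef_conjTranspose_mul_self Δ).nonneg
  have hΔPΔ : 0 ≤ Δ * P * Δ := by
    simpa [hΔ.eq] using (hP.posSemidef.conjTranspose_mul_mul_same Δ).nonneg
  have hexpand : trace ((c • 1 + P) * Δ * ((c • 1 + P) * Δ))
      = c ^ 2 * trace (Δ * Δ) + 2 * c * trace (P * (Δ * Δ)) + trace (P * (Δ * P * Δ)) := by
    simp only [add_mul, mul_add, smul_mul_assoc, mul_smul_comm, one_mul, trace_add, trace_smul,
      smul_eq_mul, Matrix.mul_assoc]
    rw [trace_mul_comm Δ (P * Δ), Matrix.mul_assoc]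
    ring
  rw [hexpand]
  have := trace_mul_nonneg hP hΔΔ
  have := trace_mul_nonneg hP hΔPΔ
  nlinarith

lemma IsHermitian.smul_one_le_iff_le_eigenvalues {A : Matrix n n ℝ} (hA : A.IsHermitian) (a : ℝ) :
    a • 1 ≤ A ↔ ∀ i, a ≤ hA.eigenvalues i := by
  rw [← Algebra.algebraMap_eq_smul_one, algebraMap_le_iff_le_spectrum (ha := hA.isSelfAdjoint),
    hA.spectrum_real_eq_range_eigenvalues, Set.forall_mem_range]

lemma IsHermitian.le_smul_one_iff_eigenvalues_le {A : Matrix n n ℝ} (hA : A.IsHermitian) (b : ℝ) :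
    A ≤ b • 1 ↔ ∀ i, hA.eigenvalues i ≤ b := by
  rw [← Algebra.algebraMap_eq_smul_one, le_algebraMap_iff_spectrum_le (ha := hA.isSelfAdjoint),
    hA.spectrum_real_eq_range_eigenvalues, Set.forall_mem_range]

lemma PosDef.inv_smul_one_le_inv {A : Matrix n n ℝ} (hA : A.PosDef) {b : ℝ} (hb : 0 < b)
    (hAb : A ≤ b • 1) : b⁻¹ • 1 ≤ A⁻¹ := by
  rw [← Algebra.algebraMap_eq_smul_one,
    algebraMap_le_iff_le_spectrum (ha := hA.inv.1.isSelfAdjoint)]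
  intro x hx
  rw [← hA.isUnit.unit_spec, ← coe_units_inv, ← spectrum.map_inv, hA.isUnit.unit_spec,
    hA.1.spectrum_real_eq_range_eigenvalues] at hx
  obtain ⟨i, hi⟩ := hx
  have hx0 : 0 < x := inv_pos.mp (hi ▸ hA.eigenvalues_pos i)
  have hxb : x⁻¹ ≤ b := hi ▸ (hA.1.le_smul_one_iff_eigenvalues_le b).mp hAb i
  exact (inv_le_comm₀ hx0 hb).mp hxb

lemma hasDerivAt_det_one_add_smul (M : Matrix n n ℝ) :
    HasDerivAt (fun t : ℝ => det (1 + t • M)) (trace M) 0 := by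
  have hP := (det (1 + (Polynomial.X : Polynomial ℝ) • M.map Polynomial.C)).hasDerivAt 0
  rw [derivative_det_one_add_X_smul] at hP
  have hfun : (fun t : ℝ => det (1 + t • M))
      = fun t => (det (1 + (Polynomial.X : Polynomial ℝ) • M.map Polynomial.C)).eval t := by
    funext t
    simp [eval_det, ← smul_eq_mul_diagonal]
  rwa [hfun]

lemma hasDerivAt_det_add_smul {A Δ : Matrix n n ℝ} {s : ℝ} (hs : IsUnit (A + s • Δ)) :
    HasDerivAt (fun t : ℝ => det (A + t • Δ))
      (det (A + s • Δ) * trace ((A + s • Δ)⁻¹ * Δ)) s := by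
  set B := A + s • Δ
  have hline : ∀ t : ℝ, A + t • Δ = B * (1 + (t - s) • (B⁻¹ * Δ)) := by
    intro t
    rw [Matrix.mul_add, Matrix.mul_one, Matrix.mul_smul, ← Matrix.mul_assoc,
      mul_nonsing_inv _ ((isUnit_iff_isUnit_det B).mp hs), Matrix.one_mul]
    module
  simp_rw [hline, det_mul]
  refine HasDerivAt.const_mul _ ?_
  have h0 := hasDerivAt_det_one_add_smul (B⁻¹ * Δ)
  rw [← sub_self s] at h0
  exact h0.comp_sub_const s s

lemma hasDerivAt_log_det_add_smul {A Δ : Matrix n n ℝ} {s : ℝ} (hs : IsUnit (A + s • Δ)) :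
    HasDerivAt (fun t : ℝ => Real.log (det (A + t • Δ))) (trace ((A + s • Δ)⁻¹ * Δ)) s := by
  have hdet : det (A + s • Δ) ≠ 0 := ((isUnit_iff_isUnit_det _).mp hs).ne_zero
  convert (hasDerivAt_det_add_smul hs).log hdet using 1
  field_simp

section

-- Differentiating `Ring.inverse` needs some normed algebra structure on matrices; the statement
-- below is real-valued, so the choice does not matter.
attribute [local instance] Matrix.linftyOpNormedRing Matrix.linftyOpNormedAlgebra

lemma hasDerivAt_trace_inv_add_smul_mul {A Δ : Matrix n n ℝ} {s : ℝ} (hs : IsUnit (A + s • Δ)) :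
    HasDerivAt (fun t : ℝ => trace ((A + t • Δ)⁻¹ * Δ))
      (-trace ((A + s • Δ)⁻¹ * Δ * ((A + s • Δ)⁻¹ * Δ))) s := by
  have hline : HasDerivAt (fun t : ℝ => A + t • Δ) Δ s := by
    have h := ((hasDerivAt_id s).smul_const Δ).const_add A
    simp only [id, one_smul] at h
    exact h
  have hinv := hasFDerivAt_ringInverse (𝕜 := ℝ) hs.unit
  rw [coe_units_inv, hs.unit_spec] at hinv
  have hcomp := hinv.comp_hasDerivAt s hline
  have key := (LinearMap.toContinuousLinearMap ((traceLinearMap n ℝ ℝ).comp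
    (LinearMap.mulRight ℝ Δ))).hasFDerivAt.comp_hasDerivAt s hcomp
  simp only [Function.comp_def, ← nonsing_inv_eq_ringInverse] at key
  refine key.congr_deriv ?_
  show trace (-((A + s • Δ)⁻¹ * Δ * (A + s • Δ)⁻¹) * Δ) = _
  simp [Matrix.mul_assoc]

end

end Matrix

section Frobenius

variable {p : ℕ}

lemma frobSq_nonneg (A : Matrix (Fin p) (Fin p) ℝ) : 0 ≤ frobSq A := by
  unfold frobSq; positivity

lemma frobNorm_smul (t : ℝ) (A : Matrix (Fin p) (Fin p) ℝ) :
    frobNorm (t • A) = |t| * frobNorm A := by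
  have : frobSq (t • A) = t ^ 2 * frobSq A := by
    simp only [frobSq, Matrix.smul_apply, smul_eq_mul, mul_pow, Finset.mul_sum]
  rw [frobNorm, frobNorm, this, Real.sqrt_mul (sq_nonneg t), Real.sqrt_sq_eq_abs]

lemma Matrix.IsSymm.frobSq_eq_trace_mul_self {A : Matrix (Fin p) (Fin p) ℝ} (hA : A.IsSymm) :
    frobSq A = trace (A * A) := by
  simp only [frobSq, trace, diag, mul_apply, sq, hA.apply]

lemma sq_dotProduct_mulVec_le (A : Matrix (Fin p) (Fin p) ℝ) (x : Fin p → ℝ) :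
    (x ⬝ᵥ (A *ᵥ x)) ^ 2 ≤ frobSq A * (x ⬝ᵥ x) ^ 2 := by
  have h := Finset.sum_mul_sq_le_sq_mul_sq Finset.univ
    (fun ij : Fin p × Fin p => A ij.1 ij.2) (fun ij => x ij.1 * x ij.2)
  simp only [Fintype.sum_prod_type] at h
  have hquad : x ⬝ᵥ (A *ᵥ x) = ∑ i, ∑ j, A i j * (x i * x j) := by
    simp only [dotProduct, mulVec, Finset.mul_sum]
    exact Finset.sum_congr rfl fun i _ => Finset.sum_congr rfl fun j _ => by ring
  have hnorm : (x ⬝ᵥ x) ^ 2 = ∑ i, ∑ j, (x i * x j) ^ 2 := by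
    simp only [dotProduct, sq, Finset.sum_mul_sum]
    exact Finset.sum_congr rfl fun i _ => Finset.sum_congr rfl fun j _ => by ring
  rw [hquad, hnorm]
  exact h

lemma abs_dotProduct_mulVec_le (A : Matrix (Fin p) (Fin p) ℝ) (x : Fin p → ℝ) :
    |x ⬝ᵥ (A *ᵥ x)| ≤ frobNorm A * (x ⬝ᵥ x) := by
  have hxx : 0 ≤ x ⬝ᵥ x := by simpa using dotProduct_star_self_nonneg x
  calc |x ⬝ᵥ (A *ᵥ x)| ≤ Real.sqrt (frobSq A * (x ⬝ᵥ x) ^ 2) :=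
        Real.abs_le_sqrt (sq_dotProduct_mulVec_le A x)
    _ = frobNorm A * (x ⬝ᵥ x) := by
        rw [Real.sqrt_mul (frobSq_nonneg A), Real.sqrt_sq hxx, frobNorm]

lemma Matrix.IsSymm.le_smul_one_of_frobNorm_le {A : Matrix (Fin p) (Fin p) ℝ} (hA : A.IsSymm)
    {r : ℝ} (hr : frobNorm A ≤ r) : A ≤ r • 1 := by
  refine PosSemidef.of_dotProduct_mulVec_nonneg
    (isHermitian_iff_isSymm.mpr ((isSymm_one.smul r).sub hA)) fun x => ?_
  have hquad := abs_le.mp (abs_dotProduct_mulVec_le A x)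
  have hxx : 0 ≤ x ⬝ᵥ x := by simpa using dotProduct_star_self_nonneg x
  simp only [star_trivial, sub_mulVec, smul_mulVec, one_mulVec, dotProduct_sub, dotProduct_smul,
    smul_eq_mul, sub_nonneg]
  nlinarith [mul_le_mul_of_nonneg_right hr hxx]

lemma Matrix.IsSymm.neg_smul_one_le_of_frobNorm_le {A : Matrix (Fin p) (Fin p) ℝ} (hA : A.IsSymm)
    {r : ℝ} (hr : frobNorm A ≤ r) : -r • 1 ≤ A := by
  have hneg : frobNorm (-A) ≤ r := by
    rwa [← neg_one_smul ℝ A, frobNorm_smul, abs_neg, abs_one, one_mul]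
  rw [neg_smul]
  exact neg_le.mp (hA.neg.le_smul_one_of_frobNorm_le hneg)

lemma frobNorm_smul_le {Δ : Matrix (Fin p) (Fin p) ℝ} {r t : ℝ} (hr : frobNorm Δ ≤ r)
    (ht : |t| ≤ 1) : frobNorm (t • Δ) ≤ r := by
  rw [frobNorm_smul]
  exact (mul_le_of_le_one_left (Real.sqrt_nonneg _) ht).trans hr

lemma smul_one_le_add_smul_of_frobNorm_le {Θ Δ : Matrix (Fin p) (Fin p) ℝ} {a r t : ℝ}
    (hΘ : a • 1 ≤ Θ) (hΔ : Δ.IsSymm) (hr : frobNorm Δ ≤ r) (ht : |t| ≤ 1) :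
    (a - r) • 1 ≤ Θ + t • Δ := by
  rw [sub_eq_add_neg, add_smul]
  exact add_le_add hΘ ((hΔ.smul t).neg_smul_one_le_of_frobNorm_le (frobNorm_smul_le hr ht))

lemma add_smul_le_smul_one_of_frobNorm_le {Θ Δ : Matrix (Fin p) (Fin p) ℝ} {b r t : ℝ}
    (hΘ : Θ ≤ b • 1) (hΔ : Δ.IsSymm) (hr : frobNorm Δ ≤ r) (ht : |t| ≤ 1) :
    Θ + t • Δ ≤ (b + r) • 1 := by
  rw [add_smul]
  exact add_le_add hΘ ((hΔ.smul t).le_smul_one_of_frobNorm_le (frobNorm_smul_le hr ht))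

lemma frobSq_div_sq_le_trace_inv_mul_inv_mul {Θ Δ : Matrix (Fin p) (Fin p) ℝ} (hΘ : Θ.PosDef)
    {M : ℝ} (hM : 0 < M) (hΘM : Θ ≤ M • 1) (hΔ : Δ.IsSymm) :
    frobSq Δ / M ^ 2 ≤ trace (Θ⁻¹ * Δ * (Θ⁻¹ * Δ)) := by
  have := sq_mul_trace_mul_self_le (inv_nonneg.mpr hM.le) (hΘ.inv_smul_one_le_inv hM hΘM) hΔ
  rwa [← hΔ.frobSq_eq_trace_mul_self, inv_pow, inv_mul_eq_div] at this

end Frobenius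

section Calculus

open Set

lemma monotoneOn_Icc_of_hasDerivAt_nonneg {g g' : ℝ → ℝ} {a b : ℝ}
    (hg : ∀ t ∈ Icc a b, HasDerivAt g (g' t) t) (hg' : ∀ t ∈ Icc a b, 0 ≤ g' t) :
    MonotoneOn g (Icc a b) :=
  monotoneOn_of_hasDerivWithinAt_nonneg (f' := g') (convex_Icc a b)
    (fun t ht => (hg t ht).continuousAt.continuousWithinAt)
    (fun t ht => (hg t (interior_subset ht)).hasDerivWithinAt)
    (fun t ht => hg' t (interior_subset ht))

lemma add_deriv_mul_add_le_of_le_second_deriv {f f' f'' : ℝ → ℝ} {a b K : ℝ} (hab : a ≤ b)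
    (hf : ∀ t ∈ Icc a b, HasDerivAt f (f' t) t) (hf' : ∀ t ∈ Icc a b, HasDerivAt f' (f'' t) t)
    (hK : ∀ t ∈ Icc a b, K ≤ f'' t) :
    f a + f' a * (b - a) + K / 2 * (b - a) ^ 2 ≤ f b := by
  have ha : a ∈ Icc a b := left_mem_Icc.mpr hab
  have hshift : ∀ t, HasDerivAt (fun s : ℝ => s - a) 1 t := fun t => (hasDerivAt_id' t).sub_const a
  have hslope : ∀ t ∈ Icc a b, 0 ≤ f' t - f' a - K * (t - a) := by
    have hmono : MonotoneOn (fun t => f' t - f' a - K * (t - a)) (Icc a b) := by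
      refine monotoneOn_Icc_of_hasDerivAt_nonneg (fun t ht => ?_)
        (fun t ht => sub_nonneg.mpr (hK t ht))
      exact (((hf' t ht).sub_const (f' a)).sub ((hshift t).const_mul K)).congr_deriv (by ring)
    intro t ht
    simpa using hmono ha ht ht.1
  have hmono : MonotoneOn (fun t => f t - f a - f' a * (t - a) - K / 2 * (t - a) ^ 2)
      (Icc a b) := by
    refine monotoneOn_Icc_of_hasDerivAt_nonneg (fun t ht => ?_) hslope
    refine ((((hf t ht).sub_const (f a)).sub ((hshift t).const_mul (f' a))).sub
      (((hshift t).pow 2).const_mul (K / 2))).congr_deriv ?_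
    push_cast
    ring
  have := hmono ha (right_mem_Icc.mpr hab) hab
  simp only [sub_self, mul_zero, zero_pow two_ne_zero] at this
  linarith

end Calculus

theorem lemma_basic_quadratic_lower_bound_general
    (p : ℕ) (L : ℝ) (hL : 1 ≤ L)
    (Θ₀ : Matrix (Fin p) (Fin p) ℝ) (hΘ₀ : Θ₀.PosDef)
    (heig : ∀ i, 1 / L ≤ hΘ₀.1.eigenvalues i ∧ hΘ₀.1.eigenvalues i ≤ L)
    (Δ : Matrix (Fin p) (Fin p) ℝ) (hΔ : Δ.IsSymm)
    (hΔF : frobNorm Δ ≤ 1 / (2 * L)) :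
    (Δ + Θ₀).PosDef ∧
      Matrix.trace (Δ * Θ₀⁻¹) - (Real.log (Δ + Θ₀).det - Real.log Θ₀.det)
        ≥ frobSq Δ / (2 * (L + 1 / (2 * L)) ^ 2) := by
  have hL0 : 0 < L := by linarith
  have hlow : (1 / L) • 1 ≤ Θ₀ := (hΘ₀.1.smul_one_le_iff_le_eigenvalues _).mpr (heig · |>.1)
  have hup : Θ₀ ≤ L • 1 := (hΘ₀.1.le_smul_one_iff_eigenvalues_le _).mpr (heig · |>.2)
  have habs : ∀ t ∈ Set.Icc (0 : ℝ) 1, |t| ≤ 1 := fun t ht => abs_le.mpr ⟨by linarith [ht.1], ht.2⟩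
  have hposdef : ∀ t ∈ Set.Icc (0 : ℝ) 1, (Θ₀ + t • Δ).PosDef := fun t ht =>
    PosDef.of_smul_one_le (by field_simp; norm_num)
      (smul_one_le_add_smul_of_frobNorm_le hlow hΔ hΔF (habs t ht))
  have hcurv : ∀ t ∈ Set.Icc (0 : ℝ) 1, frobSq Δ / (L + 1 / (2 * L)) ^ 2 ≤
      trace ((Θ₀ + t • Δ)⁻¹ * Δ * ((Θ₀ + t • Δ)⁻¹ * Δ)) := fun t ht =>
    frobSq_div_sq_le_trace_inv_mul_inv_mul (hposdef t ht) (by positivity)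
      (add_smul_le_smul_one_of_frobNorm_le hup hΔ hΔF (habs t ht)) hΔ
  have htaylor := add_deriv_mul_add_le_of_le_second_deriv zero_le_one
    (f := fun t => t * trace (Θ₀⁻¹ * Δ) - Real.log (det (Θ₀ + t • Δ)))
    (f' := fun t => trace (Θ₀⁻¹ * Δ) - trace ((Θ₀ + t • Δ)⁻¹ * Δ))
    (fun t ht => (((hasDerivAt_id' t).mul_const _).sub
      (hasDerivAt_log_det_add_smul (hposdef t ht).isUnit)).congr_deriv (by ring))
    (fun t ht => ((hasDerivAt_trace_inv_add_smul_mul (hposdef t ht).isUnit).const_sub _).congr_deriv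
      (neg_neg _)) hcurv
  refine ⟨by simpa [add_comm] using hposdef 1 (Set.right_mem_Icc.mpr zero_le_one), ?_⟩
  simp only [zero_smul, add_zero, one_smul, zero_mul, sub_self, sub_zero, one_mul,
    one_pow] at htaylor
  rw [add_comm Δ, trace_mul_comm, ge_iff_le, mul_comm, ← div_div]
  linarith

/-- For a symmetric positive definite `Θ₀` with eigenvalues in `[1/L, L]`
(`L ≥ 1`), `Σ₀ = Θ₀⁻¹`, and any symmetric `Δ` with `‖Δ‖_F ≤ 1/(2L)`, the matrix `Δ + Θ₀`
is positive definite (so `f(Δ) = tr(ΔΣ₀) − [log det(Δ+Θ₀) − log det Θ₀]` is well defined)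
and `f(Δ) ≥ ‖Δ‖_F² / (2(L + 1/(2L))²)`. -/
theorem lemma_basic_quadratic_lower_bound
    (p : ℕ) (hp : 1 ≤ p) (L : ℝ) (hL : 1 ≤ L)
    (Θ₀ : Matrix (Fin p) (Fin p) ℝ) (hΘ₀ : Θ₀.PosDef)
    (heig : ∀ i, 1 / L ≤ hΘ₀.1.eigenvalues i ∧ hΘ₀.1.eigenvalues i ≤ L)
    (Δ : Matrix (Fin p) (Fin p) ℝ) (hΔ : Δ.IsSymm)
    (hΔF : frobNorm Δ ≤ 1 / (2 * L)) :
    (Δ + Θ₀).PosDef ∧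
      Matrix.trace (Δ * Θ₀⁻¹) - (Real.log (Δ + Θ₀).det - Real.log Θ₀.det)
        ≥ frobSq Δ / (2 * (L + 1 / (2 * L)) ^ 2) :=
  lemma_basic_quadratic_lower_bound_general p L hL Θ₀ hΘ₀ heig Δ hΔ hΔF
end
end

section
/- Let Σ̂⁽¹⁾, Σ̂⁽²⁾ be symmetric p×p real matrices and let W₁, W₂ be diagonal p×p matrices with strictly positive diagonal entries; set R̂⁽ᵏ⁾ = W_k⁻¹ Σ̂⁽ᵏ⁾ W_k⁻¹. Then for any λ, ρ ≥ 0, a pair (Θ₁, Θ₂) of symmetric positive definite matrices minimizes the weighted fused graphical lasso objective Σ_{k=1}² [tr(Σ̂⁽ᵏ⁾Θ_k) − log det Θ_k] + λ Σ_{k=1}² Σ_{i≠j} (W_k)_{ii}(W_k)_{jj}|(Θ_k)_{ij}| + ρ Σ_{i≠j} |(W₁)_{ii}(W₁)_{jj}(Θ₁)_{ij} − (W₂)_{ii}(W₂)_{jj}(Θ₂)_{ij}| over pairs of symmetric positive definite matrices if and only if (W₁Θ₁W₁, W₂Θ₂W₂) minimizes the objective Σ_{k=1}² [tr(R̂⁽ᵏ⁾Ψ_k)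 − log det Ψ_k] + λ Σ_{k=1}² ‖Ψ_k⁻‖₁ + ρ ‖Ψ₁⁻ − Ψ₂⁻‖₁ over pairs of symmetric positive definite matrices. In particular, the minimizers are related by Θ̂_R⁽ᵏ⁾ = W_k Θ̂_w⁽ᵏ⁾ W_k. -/
open Matrix
open scoped BigOperators Classical

noncomputable section

/-- Weighted fused graphical lasso objective for two groups with weight vectors `w k`. -/
def objWFGL {p : ℕ} (S : Fin 2 → Matrix (Fin p) (Fin p) ℝ) (w : Fin 2 → Fin p → ℝ)
    (lam rho : ℝ) (Θ : Fin 2 → Matrix (Fin p) (Fin p) ℝ) : ℝ :=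
  ∑ k, (Matrix.trace (S k * Θ k) - Real.log (Θ k).det)
    + lam * ∑ k, ∑ i, ∑ j, (if i = j then 0 else w k i * w k j * |Θ k i j|)
    + rho * ∑ i, ∑ j,
        (if i = j then 0 else |w 0 i * w 0 j * Θ 0 i j - w 1 i * w 1 j * Θ 1 i j|)

/-!
Conjugation `Θ ↦ W Θ W` by a positive diagonal matrix is a bijection of the positive definite
cone. Along it, `tr(W⁻¹ Σ̂ W⁻¹ · W Θ W) = tr(Σ̂ Θ)`, `log det (W Θ W) = log det Θ + log (det W)²`,
and the unweighted ℓ₁ penalties of `W Θ W` are exactly the weighted penalties of `Θ`. Hence the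
two objectives differ by a constant along the bijection, and their minimizers correspond.
-/

namespace Matrix

variable {n : Type*} [Fintype n] [DecidableEq n]

lemma PosDef.diagonal_mul_mul_diagonal {A : Matrix n n ℝ} (hA : A.PosDef) {d : n → ℝ}
    (hd : ∀ i, d i ≠ 0) : (diagonal d * A * diagonal d).PosDef := by
  have hD : IsUnit (diagonal d) := isUnit_diagonal.2 (Pi.isUnit_iff.2 fun i => (hd i).isUnit)
  simpa using hA.conjTranspose_mul_mul_same (mulVec_injective_iff_isUnit.2 hD)

lemma diagonal_mul_mul_diagonal_inv_cancel {K : Type*} [Field K] (A : Matrix n n K)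
    {d : n → K} (hd : ∀ i, d i ≠ 0) :
    diagonal d * (diagonal d⁻¹ * A * diagonal d⁻¹) * diagonal d = A := by
  ext i j
  simp only [diagonal_mul, mul_diagonal, Pi.inv_apply]
  field_simp [hd i, hd j]

lemma trace_inv_mul_mul_inv_mul_conj {R : Type*} [CommRing R] (S A D : Matrix n n R)
    (hD : IsUnit D.det) : trace (D⁻¹ * S * D⁻¹ * (D * A * D)) = trace (S * A) := by
  have h : D⁻¹ * S * D⁻¹ * (D * A * D) = D⁻¹ * (S * A * D) := by
    simp only [Matrix.mul_assoc, nonsing_inv_mul_cancel_left _ _ hD]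
  rw [h, trace_mul_comm, Matrix.mul_assoc, mul_nonsing_inv _ hD, Matrix.mul_one]

lemma det_mul_mul_same {R : Type*} [CommRing R] (A D : Matrix n n R) :
    (D * A * D).det = A.det * D.det ^ 2 := by
  rw [det_mul, det_mul]; ring

end Matrix

lemma offDiagPart_apply {p : ℕ} (A : Matrix (Fin p) (Fin p) ℝ) (i j : Fin p) :
    offDiagPart A i j = if i = j then 0 else A i j := by
  split_ifs with h
  · subst h; simp [offDiagPart, diagPart]
  · simp [offDiagPart, diagPart, h]

lemma l1Norm_offDiagPart_diagonal_mul_mul_diagonal {p : ℕ} (A : Matrix (Fin p) (Fin p) ℝ)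
    {d : Fin p → ℝ} (hd : ∀ i, 0 ≤ d i) :
    l1Norm (offDiagPart (diagonal d * A * diagonal d))
      = ∑ i, ∑ j, (if i = j then 0 else d i * d j * |A i j|) := by
  simp only [l1Norm, offDiagPart_apply, diagonal_mul, mul_diagonal, apply_ite abs, abs_zero,
    abs_mul, abs_of_nonneg (hd _)]
  congr! 3; ring

lemma l1Norm_sub_offDiagPart_diagonal_mul_mul_diagonal {p : ℕ}
    (A B : Matrix (Fin p) (Fin p) ℝ) (d e : Fin p → ℝ) :
    l1Norm (offDiagPart (diagonal d * A * diagonal d) - offDiagPart (diagonal e * B * diagonal e))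
      = ∑ i, ∑ j, (if i = j then 0 else |d i * d j * A i j - e i * e j * B i j|) := by
  simp only [l1Norm, Matrix.sub_apply, offDiagPart_apply, diagonal_mul, mul_diagonal]
  refine Finset.sum_congr rfl fun i _ => Finset.sum_congr rfl fun j _ => ?_
  split_ifs <;> simp [mul_right_comm]

lemma objFGL_conj_eq_objWFGL_sub {p : ℕ} (S : Fin 2 → Matrix (Fin p) (Fin p) ℝ)
    {w : Fin 2 → Fin p → ℝ} (hw : ∀ k i, 0 < w k i) (lam rho : ℝ)
    {Θ : Fin 2 → Matrix (Fin p) (Fin p) ℝ} (hΘ : ∀ k, 0 < (Θ k).det) :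
    objFGL (fun k => (diagonal (w k))⁻¹ * S k * (diagonal (w k))⁻¹) lam rho
        (fun k => diagonal (w k) * Θ k * diagonal (w k))
      = objWFGL S w lam rho Θ - ∑ k, Real.log ((diagonal (w k)).det ^ 2) := by
  have hdet : ∀ k, IsUnit (diagonal (w k)).det := fun k => by
    simpa [det_diagonal, Finset.prod_ne_zero_iff] using fun i => (hw k i).ne'
  have htrace := fun k => trace_inv_mul_mul_inv_mul_conj (S k) (Θ k) _ (hdet k)
  have hlog : ∀ k, Real.log (diagonal (w k) * Θ k * diagonal (w k)).det
      = Real.log (Θ k).det + Real.log ((diagonal (w k)).det ^ 2) := fun k => by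
    rw [det_mul_mul_same, Real.log_mul (hΘ k).ne' (pow_ne_zero 2 (hdet k).ne_zero)]
  have hl1 := fun k => l1Norm_offDiagPart_diagonal_mul_mul_diagonal (Θ k) fun i => (hw k i).le
  simp only [objFGL, objWFGL, Fin.sum_univ_two, Fin.lt_irrefl, Fin.zero_lt_one,
    not_lt_of_gt Fin.zero_lt_one, if_true, if_false, htrace, hlog, hl1,
    l1Norm_sub_offDiagPart_diagonal_mul_mul_diagonal]
  ring

lemma forall_le_iff_of_mapsTo_of_surjOn {α β γ : Type*} [AddCommGroup γ] [PartialOrder γ]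
    [IsOrderedAddMonoid γ] {s : Set α} {t : Set β} {g : α → β} {f : α → γ} {F : β → γ} {c : γ}
    (hmaps : Set.MapsTo g s t) (hsurj : Set.SurjOn g s t) (hF : ∀ x ∈ s, F (g x) = f x - c)
    {x : α} (hx : x ∈ s) : (∀ y ∈ s, f x ≤ f y) ↔ ∀ z ∈ t, F (g x) ≤ F z := by
  constructor
  · intro hmin z hz
    obtain ⟨y, hy, rfl⟩ := hsurj hz
    rw [hF x hx, hF y hy]
    exact sub_le_sub_right (hmin y hy) c
  · intro hmin y hy
    simpa only [hF x hx, hF y hy, sub_le_sub_iff_right] using hmin (g y) (hmaps hy)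

theorem weighted_FGL_equivalence_general
    (p : ℕ) (Shat : Fin 2 → Matrix (Fin p) (Fin p) ℝ)
    (w : Fin 2 → Fin p → ℝ) (hw : ∀ k i, 0 < w k i)
    (lam rho : ℝ)
    (Θ : Fin 2 → Matrix (Fin p) (Fin p) ℝ) (hΘ : ∀ k, (Θ k).PosDef) :
    (∀ Ψ : Fin 2 → Matrix (Fin p) (Fin p) ℝ, (∀ k, (Ψ k).PosDef) →
        objWFGL Shat w lam rho Θ ≤ objWFGL Shat w lam rho Ψ) ↔
    (∀ Ψ : Fin 2 → Matrix (Fin p) (Fin p) ℝ, (∀ k, (Ψ k).PosDef) →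
        objFGL (fun k => (Matrix.diagonal (w k))⁻¹ * Shat k * (Matrix.diagonal (w k))⁻¹)
            lam rho (fun k => Matrix.diagonal (w k) * Θ k * Matrix.diagonal (w k))
          ≤ objFGL (fun k => (Matrix.diagonal (w k))⁻¹ * Shat k * (Matrix.diagonal (w k))⁻¹)
              lam rho Ψ) := by
  have hw₀ : ∀ k i, w k i ≠ 0 := fun k i => (hw k i).ne'
  let posDefPairs : Set (Fin 2 → Matrix (Fin p) (Fin p) ℝ) := {Ψ | ∀ k, (Ψ k).PosDef}
  refine forall_le_iff_of_mapsTo_of_surjOn (s := posDefPairs) (t := posDefPairs)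
    (g := fun Ψ k => diagonal (w k) * Ψ k * diagonal (w k)) ?_ ?_
    (fun Ψ hΨ => objFGL_conj_eq_objWFGL_sub Shat hw lam rho fun k => (hΨ k).det_pos) hΘ
  · exact fun Ψ (hΨ : ∀ k, (Ψ k).PosDef) k => (hΨ k).diagonal_mul_mul_diagonal (hw₀ k)
  · intro Ψ (hΨ : ∀ k, (Ψ k).PosDef)
    refine ⟨fun k => diagonal (w k)⁻¹ * Ψ k * diagonal (w k)⁻¹, fun k => ?_, ?_⟩
    · exact (hΨ k).diagonal_mul_mul_diagonal fun i => inv_ne_zero (hw₀ k i)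
    · exact funext fun k => diagonal_mul_mul_diagonal_inv_cancel (Ψ k) (hw₀ k)

/-- With `W_k` diagonal with positive diagonal entries `w k` and
`R̂⁽ᵏ⁾ = W_k⁻¹ Σ̂⁽ᵏ⁾ W_k⁻¹`, a pair `(Θ₁,Θ₂)` of symmetric positive definite matrices
minimizes the weighted fused graphical lasso objective iff `(W₁Θ₁W₁, W₂Θ₂W₂)` minimizes
the (unweighted) fused graphical lasso objective built from the `R̂⁽ᵏ⁾`; in particular
the minimizers are related by `Θ̂_R⁽ᵏ⁾ = W_k Θ̂_w⁽ᵏ⁾ W_k`. -/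
theorem weighted_FGL_equivalence
    (p : ℕ) (Shat : Fin 2 → Matrix (Fin p) (Fin p) ℝ) (hS : ∀ k, (Shat k).IsSymm)
    (w : Fin 2 → Fin p → ℝ) (hw : ∀ k i, 0 < w k i)
    (lam rho : ℝ) (hlam : 0 ≤ lam) (hrho : 0 ≤ rho)
    (Θ : Fin 2 → Matrix (Fin p) (Fin p) ℝ) (hΘ : ∀ k, (Θ k).PosDef) :
    (∀ Ψ : Fin 2 → Matrix (Fin p) (Fin p) ℝ, (∀ k, (Ψ k).PosDef) →
        objWFGL Shat w lam rho Θ ≤ objWFGL Shat w lam rho Ψ) ↔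
    (∀ Ψ : Fin 2 → Matrix (Fin p) (Fin p) ℝ, (∀ k, (Ψ k).PosDef) →
        objFGL (fun k => (Matrix.diagonal (w k))⁻¹ * Shat k * (Matrix.diagonal (w k))⁻¹)
            lam rho (fun k => Matrix.diagonal (w k) * Θ k * Matrix.diagonal (w k))
          ≤ objFGL (fun k => (Matrix.diagonal (w k))⁻¹ * Shat k * (Matrix.diagonal (w k))⁻¹)
              lam rho Ψ) :=
  weighted_FGL_equivalence_general p Shat w hw lam rho Θ hΘ
end
end

section
/- Let A be a symmetric positive semidefinite p×p real matrix such that every column of A has at most d+1 nonzero entries, where d ≥ 0 is an integer. Then the ℓ₁-operator norm of A satisfies |||A|||₁ ≤ √(d+1) · Λ_max(A), where Λ_max(A) is the largest eigenvalue of A. -/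
open Matrix
open scoped BigOperators Classical

noncomputable section

/-!
A positive semidefinite matrix has spectral norm `Λ_max(A)`, so each column, being the image of a
unit vector, has Euclidean length at most `Λ_max(A)`. A column with at most `d + 1` nonzero
entries has ℓ₁-norm at most `√(d + 1)` times its Euclidean length, by Cauchy–Schwarz on its support.
-/

open scoped Matrix.Norms.L2Operator ComplexOrder

lemma sum_abs_le_sqrt_card_support_mul_sqrt_sum_sq {ι : Type*} [Fintype ι] (v : ι → ℝ) :
    ∑ i, |v i| ≤ √(Finset.univ.filter (fun i => v i ≠ 0)).card * √(∑ i, v i ^ 2) := by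
  set s := Finset.univ.filter (fun i => v i ≠ 0)
  have sum_eq_sum_support : ∀ f : ℝ → ℝ, f 0 = 0 → ∑ i, f (v i) = ∑ i ∈ s, f (v i) :=
    fun f hf => (Finset.sum_filter_of_ne fun i _ hi => by rintro h; simp [h, hf] at hi).symm
  rw [← Real.sqrt_mul (Nat.cast_nonneg _), sum_eq_sum_support _ abs_zero,
    sum_eq_sum_support (· ^ 2) (zero_pow two_ne_zero)]
  refine Real.le_sqrt_of_sq_le ?_
  simpa only [sq_abs] using sq_sum_le_card_mul_sum_sq (s := s) (f := fun i => |v i|)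

namespace Matrix

variable {𝕜 : Type*} [RCLike 𝕜] {m n : Type*} [Fintype m] [Fintype n] [DecidableEq n]

lemma sqrt_sum_norm_sq_le_l2_opNorm (A : Matrix m n 𝕜) (j : n) :
    √(∑ i, ‖A i j‖ ^ 2) ≤ ‖A‖ := by
  simpa [EuclideanSpace.norm_eq] using A.l2_opNorm_mulVec (EuclideanSpace.single j 1)

lemma IsHermitian.l2_opNorm_eq_norm_eigenvalues {A : Matrix n n 𝕜} (hA : A.IsHermitian) :
    ‖A‖ = ‖hA.eigenvalues‖ := by
  conv_lhs => rw [hA.spectral_theorem]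
  rw [Unitary.conjStarAlgAut_apply, ← Unitary.coe_star, CStarRing.norm_mul_coe_unitary,
    CStarRing.norm_coe_unitary_mul, l2_opNorm_diagonal]
  simp [Pi.norm_def]

lemma PosSemidef.l2_opNorm_le_iSup_eigenvalues {A : Matrix n n 𝕜} (hA : A.PosSemidef) :
    ‖A‖ ≤ ⨆ i, hA.1.eigenvalues i := by
  rw [hA.1.l2_opNorm_eq_norm_eigenvalues]
  refine (pi_norm_le_iff_of_nonneg (Real.iSup_nonneg hA.eigenvalues_nonneg)).mpr fun i => ?_
  rw [Real.norm_of_nonneg (hA.eigenvalues_nonneg i)]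
  exact le_ciSup (Set.finite_range _).bddAbove i

end Matrix

/-- If `A` is symmetric positive semidefinite and every column of `A` has
at most `d+1` nonzero entries, then `|||A|||₁ ≤ √(d+1) · Λ_max(A)`. -/
theorem opNorm1_le_sqrt_card_mul_eigMax
    (p d : ℕ) (A : Matrix (Fin p) (Fin p) ℝ) (hA : A.PosSemidef)
    (hcol : ∀ j, (Finset.univ.filter (fun i => A i j ≠ 0)).card ≤ d + 1) :
    opNorm1 A ≤ Real.sqrt ((d : ℝ) + 1) * ⨆ i, hA.1.eigenvalues i := by
  have hμ : 0 ≤ ⨆ i, hA.1.eigenvalues i := Real.iSup_nonneg hA.eigenvalues_nonneg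
  refine Real.iSup_le (fun j => ?_) (mul_nonneg (Real.sqrt_nonneg _) hμ)
  have col_le : √(∑ i, A i j ^ 2) ≤ ‖A‖ := by
    simpa only [Real.norm_eq_abs, sq_abs] using A.sqrt_sum_norm_sq_le_l2_opNorm j
  have card_le : √((Finset.univ.filter (fun i => A i j ≠ 0)).card : ℝ) ≤ √((d : ℝ) + 1) :=
    Real.sqrt_le_sqrt (by exact_mod_cast hcol j)
  calc ∑ i, |A i j|
      ≤ √((Finset.univ.filter (fun i => A i j ≠ 0)).card : ℝ) * √(∑ i, A i j ^ 2) :=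
        sum_abs_le_sqrt_card_support_mul_sqrt_sum_sq (A · j)
    _ ≤ √((d : ℝ) + 1) * ⨆ i, hA.1.eigenvalues i := by
        gcongr
        exact col_le.trans hA.l2_opNorm_le_iSup_eigenvalues
end
end

section
/- For k = 1, 2, let Θ̂⁽ᵏ⁾, Θ₀⁽ᵏ⁾, Σ̂⁽ᵏ⁾, Σ₀⁽ᵏ⁾ be symmetric p×p real matrices with Σ₀⁽ᵏ⁾ invertible and Θ₀⁽ᵏ⁾ = (Σ₀⁽ᵏ⁾)⁻¹, and suppose there exist matrices Z_k with ‖Z_k‖_∞ ≤ 1 and real numbers μ_k ≥ 0 such that I − Σ̂⁽ᵏ⁾Θ̂⁽ᵏ⁾ = μ_k Z_k Θ̂⁽ᵏ⁾. Define Υ⁽ᵏ⁾ = −(Θ̂⁽ᵏ⁾ − Θ₀⁽ᵏ⁾)(Σ̂⁽ᵏ⁾ − Σ₀⁽ᵏ⁾)Θ₀⁽ᵏ⁾ − (Θ̂⁽ᵏ⁾Σ̂⁽ᵏ⁾ − I)(Θ̂⁽ᵏ⁾ − Θ₀⁽ᵏ⁾). Then ‖Υ⁽¹⁾ − Υ⁽²⁾‖_∞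 ≤ Σ_{k=1}² |||Θ̂⁽ᵏ⁾ − Θ₀⁽ᵏ⁾|||₁ ( ‖Σ̂⁽ᵏ⁾ − Σ₀⁽ᵏ⁾‖_∞ |||Θ₀⁽ᵏ⁾|||₁ + μ_k |||Θ̂⁽ᵏ⁾|||₁ ). -/
open Matrix
open scoped BigOperators Classical

noncomputable section

/-!
Each remainder is bounded separately. Since `Θ̂` and `Σ̂` are symmetric, transposing the KKT
identity gives `Θ̂Σ̂ − I = −μ Θ̂ Zᵀ`, so both terms of `Υ` are triple products `A B C` with `A`
symmetric, and `‖A B C‖_∞ ≤ |||Aᵀ|||₁ ‖B‖_∞ |||C|||₁`.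
-/

section Norms

variable {p : ℕ}

lemma supNorm_nonneg (A : Matrix (Fin p) (Fin p) ℝ) : 0 ≤ supNorm A :=
  Real.iSup_nonneg fun _ => Real.iSup_nonneg fun _ => abs_nonneg _

lemma abs_apply_le_supNorm (A : Matrix (Fin p) (Fin p) ℝ) (i j : Fin p) :
    |A i j| ≤ supNorm A :=
  (le_ciSup (Set.finite_range fun j => |A i j|).bddAbove j).trans
    (le_ciSup (Set.finite_range fun i => ⨆ j, |A i j|).bddAbove i)

lemma supNorm_le {A : Matrix (Fin p) (Fin p) ℝ} {c : ℝ} (hc : 0 ≤ c)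
    (h : ∀ i j, |A i j| ≤ c) : supNorm A ≤ c :=
  Real.iSup_le (fun i => Real.iSup_le (h i) hc) hc

lemma opNorm1_nonneg (A : Matrix (Fin p) (Fin p) ℝ) : 0 ≤ opNorm1 A :=
  Real.iSup_nonneg fun _ => Finset.sum_nonneg fun _ _ => abs_nonneg _

lemma sum_abs_apply_le_opNorm1 (A : Matrix (Fin p) (Fin p) ℝ) (j : Fin p) :
    ∑ i, |A i j| ≤ opNorm1 A :=
  le_ciSup (Set.finite_range fun j => ∑ i, |A i j|).bddAbove j

lemma supNorm_transpose (A : Matrix (Fin p) (Fin p) ℝ) : supNorm Aᵀ = supNorm A :=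
  le_antisymm (supNorm_le (supNorm_nonneg A) fun i j => abs_apply_le_supNorm A j i)
    (supNorm_le (supNorm_nonneg Aᵀ) fun i j => abs_apply_le_supNorm Aᵀ j i)

lemma supNorm_neg (A : Matrix (Fin p) (Fin p) ℝ) : supNorm (-A) = supNorm A := by
  simp only [supNorm, Matrix.neg_apply, abs_neg]

lemma supNorm_sub_le (A B : Matrix (Fin p) (Fin p) ℝ) :
    supNorm (A - B) ≤ supNorm A + supNorm B :=
  supNorm_le (add_nonneg (supNorm_nonneg A) (supNorm_nonneg B)) fun i j =>
    (abs_sub (A i j) (B i j)).trans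
      (add_le_add (abs_apply_le_supNorm A i j) (abs_apply_le_supNorm B i j))

lemma supNorm_smul_le (c : ℝ) (A : Matrix (Fin p) (Fin p) ℝ) :
    supNorm (c • A) ≤ |c| * supNorm A :=
  supNorm_le (mul_nonneg (abs_nonneg c) (supNorm_nonneg A)) fun i j => by
    rw [Matrix.smul_apply, smul_eq_mul, abs_mul]
    exact mul_le_mul_of_nonneg_left (abs_apply_le_supNorm A i j) (abs_nonneg c)

lemma supNorm_mul_le_supNorm_mul_opNorm1 (A B : Matrix (Fin p) (Fin p) ℝ) :
    supNorm (A * B) ≤ supNorm A * opNorm1 B := by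
  refine supNorm_le (mul_nonneg (supNorm_nonneg A) (opNorm1_nonneg B)) fun i j => ?_
  calc |(A * B) i j| ≤ ∑ k, |A i k| * |B k j| := by
        simpa only [mul_apply, abs_mul] using
          Finset.abs_sum_le_sum_abs (fun k => A i k * B k j) Finset.univ
    _ ≤ ∑ k, supNorm A * |B k j| := by
        gcongr with k
        exact abs_apply_le_supNorm A i k
    _ ≤ supNorm A * opNorm1 B := by
        rw [← Finset.mul_sum]
        exact mul_le_mul_of_nonneg_left (sum_abs_apply_le_opNorm1 B j) (supNorm_nonneg A)

lemma supNorm_mul_le_opNorm1_transpose_mul_supNorm (A B : Matrix (Fin p) (Fin p) ℝ) :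
    supNorm (A * B) ≤ opNorm1 Aᵀ * supNorm B := by
  rw [← supNorm_transpose, transpose_mul, ← supNorm_transpose B, mul_comm]
  exact supNorm_mul_le_supNorm_mul_opNorm1 Bᵀ Aᵀ

lemma Matrix.IsSymm.supNorm_mul_mul_le {A : Matrix (Fin p) (Fin p) ℝ} (hA : A.IsSymm)
    (B C : Matrix (Fin p) (Fin p) ℝ) :
    supNorm (A * B * C) ≤ opNorm1 A * supNorm B * opNorm1 C := by
  calc supNorm (A * B * C) ≤ supNorm (A * B) * opNorm1 C :=
        supNorm_mul_le_supNorm_mul_opNorm1 _ _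
    _ ≤ opNorm1 A * supNorm B * opNorm1 C := by
        gcongr
        · exact opNorm1_nonneg C
        · simpa only [hA.eq] using supNorm_mul_le_opNorm1_transpose_mul_supNorm A B

end Norms

/-- `Υ` is the remainder in `Θ̂ + Θ̂ᵀ − Θ̂ᵀΣ̂Θ̂ − Θ₀ = −Θ₀(Σ̂ − Σ₀)Θ₀ + Υ` for symmetric `Θ̂` and
`Θ₀ = Σ₀⁻¹`. -/
def remainder {p : ℕ} (Θhat Θ₀ Shat S0 : Matrix (Fin p) (Fin p) ℝ) : Matrix (Fin p) (Fin p) ℝ :=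
  -((Θhat - Θ₀) * (Shat - S0) * Θ₀) - (Θhat * Shat - 1) * (Θhat - Θ₀)

section Remainder

variable {p : ℕ} {Θhat Θ₀ Shat S0 Z : Matrix (Fin p) (Fin p) ℝ} {μ : ℝ}

lemma mul_sub_one_eq_of_one_sub_mul_eq (hΘhat : Θhat.IsSymm) (hShat : Shat.IsSymm)
    (hKKT : 1 - Shat * Θhat = μ • (Z * Θhat)) :
    Θhat * Shat - 1 = -(μ • (Θhat * Zᵀ)) := by
  have h := congrArg transpose hKKT
  rw [transpose_sub, transpose_one, transpose_mul, transpose_smul, transpose_mul,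
    hΘhat.eq, hShat.eq] at h
  rw [← h, neg_sub]

lemma supNorm_remainder_le (hΘhat : Θhat.IsSymm) (hΘ₀ : Θ₀.IsSymm) (hShat : Shat.IsSymm)
    (hZ : supNorm Z ≤ 1) (hμ : 0 ≤ μ) (hKKT : 1 - Shat * Θhat = μ • (Z * Θhat)) :
    supNorm (remainder Θhat Θ₀ Shat S0) ≤
      opNorm1 (Θhat - Θ₀) * (supNorm (Shat - S0) * opNorm1 Θ₀ + μ * opNorm1 Θhat) := by
  set D := Θhat - Θ₀
  have hD : D.IsSymm := hΘhat.sub hΘ₀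
  have hKKT_term : (Θhat * Shat - 1) * D = -(μ • (Θhat * Zᵀ * D)) := by
    rw [mul_sub_one_eq_of_one_sub_mul_eq hΘhat hShat hKKT, neg_mul, smul_mul]
  have hZt : supNorm Zᵀ ≤ 1 := (supNorm_transpose Z).le.trans hZ
  calc supNorm (remainder Θhat Θ₀ Shat S0)
      ≤ supNorm (D * (Shat - S0) * Θ₀) + supNorm (μ • (Θhat * Zᵀ * D)) := by
        rw [remainder, hKKT_term, ← supNorm_neg (D * _ * _), ← supNorm_neg (μ • _)]
        exact supNorm_sub_le _ _
    _ ≤ opNorm1 D * supNorm (Shat - S0) * opNorm1 Θ₀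
          + μ * (opNorm1 Θhat * supNorm Zᵀ * opNorm1 D) := by
        gcongr
        · exact hD.supNorm_mul_mul_le _ _
        · simpa only [abs_of_nonneg hμ] using
            (supNorm_smul_le μ _).trans
              (mul_le_mul_of_nonneg_left (hΘhat.supNorm_mul_mul_le _ _) (abs_nonneg μ))
    _ ≤ opNorm1 D * supNorm (Shat - S0) * opNorm1 Θ₀
          + μ * (opNorm1 Θhat * 1 * opNorm1 D) := by
        gcongr
        · exact opNorm1_nonneg D
        · exact opNorm1_nonneg Θhat
    _ = opNorm1 D * (supNorm (Shat - S0) * opNorm1 Θ₀ + μ * opNorm1 Θhat) := by ring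

end Remainder

theorem remainder_difference_bound_general
    (p : ℕ)
    (Θhat Θ₀ Shat S0 Z : Fin 2 → Matrix (Fin p) (Fin p) ℝ) (μ : Fin 2 → ℝ)
    (hΘhat_symm : ∀ k, (Θhat k).IsSymm) (hΘ₀_symm : ∀ k, (Θ₀ k).IsSymm)
    (hShat_symm : ∀ k, (Shat k).IsSymm)
    (hZ : ∀ k, supNorm (Z k) ≤ 1)
    (hμ : ∀ k, 0 ≤ μ k)
    (hKKT : ∀ k, (1 : Matrix (Fin p) (Fin p) ℝ) - Shat k * Θhat k = μ k • (Z k * Θhat k)) :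
    supNorm
        ((-((Θhat 0 - Θ₀ 0) * (Shat 0 - S0 0) * Θ₀ 0)
            - (Θhat 0 * Shat 0 - 1) * (Θhat 0 - Θ₀ 0))
          - (-((Θhat 1 - Θ₀ 1) * (Shat 1 - S0 1) * Θ₀ 1)
            - (Θhat 1 * Shat 1 - 1) * (Θhat 1 - Θ₀ 1)))
      ≤ ∑ k, opNorm1 (Θhat k - Θ₀ k) *
          (supNorm (Shat k - S0 k) * opNorm1 (Θ₀ k) + μ k * opNorm1 (Θhat k)) := by
  have bound (k : Fin 2) :=
    supNorm_remainder_le (S0 := S0 k) (hΘhat_symm k) (hΘ₀_symm k) (hShat_symm k) (hZ k) (hμ k)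
      (hKKT k)
  calc supNorm (remainder (Θhat 0) (Θ₀ 0) (Shat 0) (S0 0)
          - remainder (Θhat 1) (Θ₀ 1) (Shat 1) (S0 1))
      ≤ supNorm (remainder (Θhat 0) (Θ₀ 0) (Shat 0) (S0 0))
          + supNorm (remainder (Θhat 1) (Θ₀ 1) (Shat 1) (S0 1)) := supNorm_sub_le _ _
    _ ≤ _ := by
        rw [Fin.sum_univ_two]
        exact add_le_add (bound 0) (bound 1)

/-- Bound on the supremum norm of the difference of the two remainder
terms `Υ⁽ᵏ⁾ = −(Θ̂⁽ᵏ⁾ − Θ₀⁽ᵏ⁾)(Σ̂⁽ᵏ⁾ − Σ₀⁽ᵏ⁾)Θ₀⁽ᵏ⁾ − (Θ̂⁽ᵏ⁾Σ̂⁽ᵏ⁾ − I)(Θ̂⁽ᵏ⁾ − Θ₀⁽ᵏ⁾)`,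
given KKT-type identities `I − Σ̂⁽ᵏ⁾Θ̂⁽ᵏ⁾ = μ_k Z_k Θ̂⁽ᵏ⁾` with `‖Z_k‖_∞ ≤ 1`, `μ_k ≥ 0`. -/
theorem remainder_difference_bound
    (p : ℕ)
    (Θhat Θ₀ Shat S0 Z : Fin 2 → Matrix (Fin p) (Fin p) ℝ) (μ : Fin 2 → ℝ)
    (hΘhat_symm : ∀ k, (Θhat k).IsSymm) (hΘ₀_symm : ∀ k, (Θ₀ k).IsSymm)
    (hShat_symm : ∀ k, (Shat k).IsSymm) (hS0_symm : ∀ k, (S0 k).IsSymm)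
    (hS0 : ∀ k, IsUnit (S0 k).det)
    (hΘ₀ : ∀ k, Θ₀ k = (S0 k)⁻¹)
    (hZ : ∀ k, supNorm (Z k) ≤ 1)
    (hμ : ∀ k, 0 ≤ μ k)
    (hKKT : ∀ k, (1 : Matrix (Fin p) (Fin p) ℝ) - Shat k * Θhat k = μ k • (Z k * Θhat k)) :
    supNorm
        ((-((Θhat 0 - Θ₀ 0) * (Shat 0 - S0 0) * Θ₀ 0)
            - (Θhat 0 * Shat 0 - 1) * (Θhat 0 - Θ₀ 0))
          - (-((Θhat 1 - Θ₀ 1) * (Shat 1 - S0 1) * Θ₀ 1)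
            - (Θhat 1 * Shat 1 - 1) * (Θhat 1 - Θ₀ 1)))
      ≤ ∑ k, opNorm1 (Θhat k - Θ₀ k) *
          (supNorm (Shat k - S0 k) * opNorm1 (Θ₀ k) + μ k * opNorm1 (Θhat k)) :=
  remainder_difference_bound_general p Θhat Θ₀ Shat S0 Z μ hΘhat_symm hΘ₀_symm hShat_symm hZ hμ hKKT
end
end
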